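/- arXiv:1405.1126 — 4 statements merged into one kernel-verified Lean document; each statement's English description precedes it below -/
import Mathlib

section
/- Let D > 0 and r > 0, and define Δ(λ, c) = D(e^λ + e^{−λ} − 2) − cλ + r and c₂ = inf_{λ>0} [D(e^λ + e^{−λ} − 2) + r]/λ. Then c₂ > 0, and for every c > c₂ the equation Δ(λ, c) = 0 has exactly two distinct positive real roots λ₁(c) < λ₂(c), and moreover Δ(λ, c) < 0 for all λ ∈ (λ₁(c), λ₂(c)), while Δ(λ, c) > 0 for all λ ∈ (0, λ₁(c)) and all λ > λ₂(c). -/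
/-!
The characteristic function `t ↦ D (e^t + e^{-t} - 2) - c t + r` is strictly convex, equals `r > 0`
at `0` and grows like `D t²`. For `c > c₂` it is negative somewhere on `(0, ∞)`, so it has the sign
pattern `+ - +` at `0 < t₀ < L`, and a strictly convex function with this pattern has exactly two
zeros, negative between them and positive outside. Positivity of `c₂` comes from
`e^t + e^{-t} - 2 ≥ t²` and AM-GM: `D t² + r ≥ 2 √(D r) t`.
-/

open Real Filter

/-- The critical speed `c₂ = inf_{λ>0} [D(e^λ + e^{−λ} − 2) + r]/λ`. -/
noncomputable def critSpeed (D r : ℝ) : ℝ :=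
  sInf {y : ℝ | ∃ l : ℝ, 0 < l ∧ y = (D * (Real.exp l + Real.exp (-l) - 2) + r) / l}

open Set

section StrictConvexZeros

variable {s : Set ℝ} {f : ℝ → ℝ} {x y z : ℝ}

theorem StrictConvexOn.sub_mul_lt_sub_mul (hf : StrictConvexOn ℝ s f) (hxs : x ∈ s)
    (hzs : z ∈ s) (hxy : x < y) (hyz : y < z) :
    (f y - f x) * (z - y) < (f z - f y) * (y - x) := by
  have h := hf.slope_strict_mono_adjacent hxs hzs hxy hyz
  rwa [div_lt_div_iff₀ (sub_pos.2 hxy) (sub_pos.2 hyz)] at h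

theorem StrictConvexOn.exists_two_zeros (hf : StrictConvexOn ℝ univ f) {a m b : ℝ}
    (ham : a < m) (hmb : m < b) (ha : 0 < f a) (hm : f m < 0) (hb : 0 < f b) :
    ∃ l₁ l₂, a < l₁ ∧ l₁ < l₂ ∧ f l₁ = 0 ∧ f l₂ = 0 ∧
      (∀ l, l₁ < l → l < l₂ → f l < 0) ∧ (∀ l < l₁, 0 < f l) ∧ (∀ l, l₂ < l → 0 < f l) := by
  have hcont : Continuous f :=
    continuousOn_univ.1 (hf.convexOn.continuousOn isOpen_univ)
  obtain ⟨l₁, ⟨hal₁, hl₁m⟩, hl₁⟩ :=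
    intermediate_value_Ioo' ham.le hcont.continuousOn ⟨hm, ha⟩
  obtain ⟨l₂, ⟨hml₂, -⟩, hl₂⟩ :=
    intermediate_value_Ioo hmb.le hcont.continuousOn ⟨hm, hb⟩
  have key : ∀ {x y z}, x < y → y < z → (f y - f x) * (z - y) < (f z - f y) * (y - x) :=
    hf.sub_mul_lt_sub_mul trivial trivial
  refine ⟨l₁, l₂, hal₁, hl₁m.trans hml₂, hl₁, hl₂, fun l h₁ h₂ => ?_, fun l hl => ?_,
    fun l hl => ?_⟩
  · nlinarith [key h₁ h₂]
  · nlinarith [key hl hl₁m]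
  · nlinarith [key hml₂ hl]

end StrictConvexZeros

theorem sq_le_exp_add_exp_neg_sub_two {t : ℝ} (ht : 0 ≤ t) : t ^ 2 ≤ exp t + exp (-t) - 2 := by
  have hsinh : t / 2 ≤ sinh (t / 2) := self_le_sinh_iff.2 (by linarith)
  have hsq : exp t + exp (-t) - 2 = (2 * sinh (t / 2)) ^ 2 := by
    have h := cosh_two_mul (t / 2)
    rw [mul_div_cancel₀ t two_ne_zero, cosh_sq, cosh_eq] at h
    linear_combination 2 * h
  rw [hsq]
  nlinarith

theorem two_sqrt_mul_mul_le {D r t : ℝ} (hD : 0 ≤ D) (hr : 0 ≤ r) (ht : 0 ≤ t) :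
    2 * √(D * r) * t ≤ D * (exp t + exp (-t) - 2) + r := by
  have hE := mul_le_mul_of_nonneg_left (sq_le_exp_add_exp_neg_sub_two ht) hD
  rw [sqrt_mul hD]
  nlinarith [sq_nonneg (√D * t - √r), sq_sqrt hD, sq_sqrt hr]

theorem two_sqrt_mul_le_critSpeed {D r : ℝ} (hD : 0 ≤ D) (hr : 0 ≤ r) :
    2 * √(D * r) ≤ critSpeed D r := by
  refine le_csInf ⟨_, 1, one_pos, rfl⟩ ?_
  rintro _ ⟨t, ht, rfl⟩
  exact (le_div_iff₀ ht).2 (two_sqrt_mul_mul_le hD hr ht.le)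

theorem critSpeed_pos {D r : ℝ} (hD : 0 < D) (hr : 0 < r) : 0 < critSpeed D r :=
  lt_of_lt_of_le (by positivity) (two_sqrt_mul_le_critSpeed hD.le hr.le)

noncomputable def charFn (D r c t : ℝ) : ℝ := D * (exp t + exp (-t) - 2) - c * t + r

section CharFn

variable {D r c : ℝ}

@[simp]
theorem charFn_zero : charFn D r c 0 = r := by norm_num [charFn]

theorem strictConvexOn_charFn (hD : 0 < D) : StrictConvexOn ℝ univ (charFn D r c) := by
  refine ⟨convex_univ, fun x _ y _ hxy a b ha hb hab => ?_⟩
  have h₁ := strictConvexOn_exp.2 (mem_univ x) (mem_univ y) hxy ha hb hab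
  have h₂ := strictConvexOn_exp.2 (mem_univ (-x)) (mem_univ (-y)) (neg_injective.ne hxy) ha hb hab
  simp only [smul_eq_mul, charFn] at h₁ h₂ ⊢
  rw [show -(a * x + b * y) = a * -x + b * -y by ring]
  obtain rfl : b = 1 - a := by linarith
  nlinarith [mul_lt_mul_of_pos_left (add_lt_add h₁ h₂) hD]

theorem exists_charFn_neg_of_critSpeed_lt (hc : critSpeed D r < c) :
    ∃ t, 0 < t ∧ charFn D r c t < 0 := by
  obtain ⟨_, ⟨t, ht, rfl⟩, htc⟩ := exists_lt_of_csInf_lt (by exact ⟨_, 1, one_pos, rfl⟩) hc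
  refine ⟨t, ht, ?_⟩
  have := (div_lt_iff₀ ht).1 htc
  simp only [charFn]
  linarith

theorem exists_charFn_pos_gt (hD : 0 < D) (hr : 0 < r) (t₀ : ℝ) :
    ∃ t, t₀ < t ∧ 0 < charFn D r c t := by
  set t := max (max t₀ 0) (c / D) + 1
  have ht₀ : t₀ < t := by linarith [le_max_left (max t₀ 0) (c / D), le_max_left t₀ 0]
  have ht : 0 ≤ t := by linarith [le_max_left (max t₀ 0) (c / D), le_max_right t₀ 0]
  have hct : c < D * t := (div_lt_iff₀' hD).1 (by linarith [le_max_right (max t₀ 0) (c / D)])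
  refine ⟨t, ht₀, ?_⟩
  have hE := mul_le_mul_of_nonneg_left (sq_le_exp_add_exp_neg_sub_two ht) hD.le
  simp only [charFn]
  nlinarith

end CharFn

theorem stmt0 (D r : ℝ) (hD : 0 < D) (hr : 0 < r) :
    0 < critSpeed D r ∧
    ∀ c : ℝ, critSpeed D r < c →
      ∃ l1 l2 : ℝ, 0 < l1 ∧ l1 < l2 ∧
        D * (exp l1 + exp (-l1) - 2) - c * l1 + r = 0 ∧
        D * (exp l2 + exp (-l2) - 2) - c * l2 + r = 0 ∧
        (∀ l : ℝ, l1 < l → l < l2 → D * (exp l + exp (-l) - 2) - c * l + r < 0) ∧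
        (∀ l : ℝ, 0 < l → l < l1 → 0 < D * (exp l + exp (-l) - 2) - c * l + r) ∧
        (∀ l : ℝ, l2 < l → 0 < D * (exp l + exp (-l) - 2) - c * l + r) := by
  refine ⟨critSpeed_pos hD hr, fun c hc => ?_⟩
  obtain ⟨t₀, ht₀, hneg⟩ := exists_charFn_neg_of_critSpeed_lt hc
  obtain ⟨L, hL, hpos⟩ := exists_charFn_pos_gt (c := c) hD hr t₀
  obtain ⟨l1, l2, hl1, hl12, hzero1, hzero2, hbetween, hleft, hright⟩ :=
    (strictConvexOn_charFn hD).exists_two_zeros ht₀ hL (by rwa [charFn_zero]) hneg hpos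
  exact ⟨l1, l2, hl1, hl12, hzero1, hzero2, hbetween, fun l _ hl => hleft l hl, hright⟩
end

section
/- Let D > 0, M > 0, and f(u) = u·h(u) where h : ℝ → ℝ is Lipschitz continuous, nonincreasing on [0, M], and h(M) = 0. Suppose w, v : ℤ × [0, ∞) → ℝ are differentiable in t, take values in [0, M], and satisfy for all n ∈ ℤ and t > 0 the differential inequalities dw_n(t)/dt ≥ D(w_{n+1}(t) − 2w_n(t) + w_{n−1}(t)) + f(w_n(t)) and dv_n(t)/dt ≤ D(v_{n+1}(t) − 2v_n(t) + v_{n−1}(t)) + f(v_n(t)). If w_n(0) ≥ v_n(0) for all n ∈ ℤ, then w_n(t) ≥ v_n(t) for all n ∈ ℤ and t > 0. -/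
/-!
Put `z = v - w`. Since `h` is antitone on `[0, M]` and `h b ≤ L (M - b)`, the reaction term is
one-sided Lipschitz there: `f a - f b ≤ L M (a - b)` for `0 ≤ b ≤ a ≤ M`. Hence, wherever
`z_n ≥ 0`, `z_n' ≤ D Δz_n + L M z_n`. Because `z` is bounded, it stays below the barrier
`ε e^{Ct} (1 + n²)` for large `C`: only finitely many sites can ever reach the barrier, so
there is a first contact time, and at the contact site the barrier grows faster than `z` can.
Letting `ε → 0` gives `z ≤ 0`.
-/

open Real Set

lemma mul_apply_sub_mul_apply_le_of_antitoneOn {h : ℝ → ℝ} {L : NNReal} {M a b : ℝ}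
    (hLip : LipschitzWith L h) (hanti : AntitoneOn h (Icc 0 M)) (hM : h M = 0)
    (hb : 0 ≤ b) (hba : b ≤ a) (haM : a ≤ M) :
    a * h a - b * h b ≤ L * M * (a - b) := by
  have hhb : h b ≤ L * M :=
    calc h b = h b - h M := by rw [hM, sub_zero]
      _ ≤ dist (h b) (h M) := le_abs_self _
      _ ≤ L * dist b M := hLip.dist_le_mul b M
      _ ≤ L * M := by
        rw [Real.dist_eq, abs_of_nonpos (by linarith)]
        exact mul_le_mul_of_nonneg_left (by linarith) L.coe_nonneg
  have hmono : h a ≤ h b := hanti ⟨hb, hba.trans haM⟩ ⟨hb.trans hba, haM⟩ hba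
  calc a * h a - b * h b = a * (h a - h b) + (a - b) * h b := by ring
    _ ≤ 0 + (a - b) * (L * M) :=
      add_le_add (mul_nonpos_of_nonneg_of_nonpos (hb.trans hba) (sub_nonpos.2 hmono))
        (mul_le_mul_of_nonneg_left hhb (sub_nonneg.2 hba))
    _ = L * M * (a - b) := by ring

lemma HasDerivAt.nonneg_of_isMaxOn_Icc {φ : ℝ → ℝ} {a b d : ℝ} (hab : a < b)
    (hd : HasDerivAt φ d b) (hmax : IsMaxOn φ (Icc a b) b) : 0 ≤ d := by
  have hcone : a - b ∈ posTangentConeAt (Icc a b) b :=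
    sub_mem_posTangentConeAt_of_segment_subset
      ((convex_Icc a b).segment_subset (right_mem_Icc.2 hab.le) (left_mem_Icc.2 hab.le))
  have := hmax.localize.hasFDerivWithinAt_nonpos hd.hasFDerivAt.hasFDerivWithinAt hcone
  simp only [ContinuousLinearMap.toSpanSingleton_apply, smul_eq_mul] at this
  nlinarith

lemma exists_first_zero_of_finite {ι : Type*} {g : ι → ℝ → ℝ}
    (hcont : ∀ i, ContinuousOn (g i) (Ici 0)) (hneg : ∀ i, g i 0 < 0)
    (hfin : {i | ∃ t, 0 ≤ t ∧ 0 ≤ g i t}.Finite)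
    {i₁ : ι} {t₁ : ℝ} (ht₁ : 0 ≤ t₁) (hg₁ : 0 ≤ g i₁ t₁) :
    ∃ t₀ > 0, ∃ i₀, g i₀ t₀ = 0 ∧ ∀ i, ∀ t ∈ Icc 0 t₀, g i t ≤ 0 := by
  set S : Set ℝ := ⋃ i ∈ {i | ∃ t, 0 ≤ t ∧ 0 ≤ g i t}, Ici 0 ∩ g i ⁻¹' Ici 0
  have hmemS : ∀ i t, 0 ≤ t → 0 ≤ g i t → t ∈ S := fun i t ht hg =>
    mem_biUnion ⟨t, ht, hg⟩ ⟨ht, hg⟩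
  have hSclosed : IsClosed S := hfin.isClosed_biUnion fun i _ =>
    (hcont i).preimage_isClosed_of_isClosed isClosed_Ici isClosed_Ici
  have hSnonneg : S ⊆ Ici 0 := iUnion₂_subset fun _ _ => inter_subset_left
  obtain ⟨i₀, -, ht₀nonneg, hg₀⟩ := mem_iUnion₂.1 <|
    hSclosed.csInf_mem ⟨t₁, hmemS i₁ t₁ ht₁ hg₁⟩ (bddBelow_Ici.mono hSnonneg)
  set t₀ := sInf S
  have hbefore : ∀ i, ∀ t ∈ Ico 0 t₀, g i t ≤ 0 := fun i t ht => by
    by_contra! hpos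
    exact ht.2.not_ge (csInf_le (bddBelow_Ici.mono hSnonneg) (hmemS i t ht.1 hpos.le))
  have ht₀ : 0 < t₀ := ht₀nonneg.lt_of_ne fun h0 => (hneg i₀).not_ge (h0 ▸ hg₀)
  have hat : ∀ i, g i t₀ ≤ 0 := fun i =>
    ContinuousWithinAt.closure_le (f := g i) (g := fun _ => 0)
      (by rw [closure_Ico ht₀.ne]; exact right_mem_Icc.2 ht₀.le)
      (((hcont i) t₀ ht₀.le).mono Ico_subset_Ici_self) continuousWithinAt_const (hbefore i)
  refine ⟨t₀, ht₀, i₀, le_antisymm (hat i₀) hg₀, fun i t ht => ?_⟩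
  rcases ht.2.lt_or_eq with hlt | rfl
  exacts [hbefore i t ⟨ht.1, hlt⟩, hat i]

lemma finite_setOf_mul_one_add_sq_le {ε B : ℝ} (hε : 0 < ε) :
    {n : ℤ | ε * (1 + n ^ 2) ≤ B}.Finite := by
  refine (finite_Icc (-⌈B / ε⌉) ⌈B / ε⌉).subset fun n hn => mem_Icc.2 (abs_le.1 ?_)
  have habs : (|n| : ℝ) ≤ n ^ 2 := by
    exact_mod_cast Int.natCast_natAbs n ▸ Int.natAbs_le_self_sq n
  have hsq : (n : ℝ) ^ 2 ≤ B / ε := by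
    rw [le_div_iff₀ hε]
    linarith [hn.out]
  exact_mod_cast habs.trans (hsq.trans (Int.le_ceil _))

noncomputable def latticeBarrier (C ε : ℝ) (n : ℤ) (t : ℝ) : ℝ := ε * exp (C * t) * (1 + n ^ 2)

lemma latticeBarrier_laplacian (C ε : ℝ) (n : ℤ) (t : ℝ) :
    latticeBarrier C ε (n + 1) t - 2 * latticeBarrier C ε n t + latticeBarrier C ε (n - 1) t
      = 2 * ε * exp (C * t) := by
  simp only [latticeBarrier]
  push_cast
  ring

lemma hasDerivAt_latticeBarrier (C ε : ℝ) (n : ℤ) (t : ℝ) :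
    HasDerivAt (latticeBarrier C ε n) (C * latticeBarrier C ε n t) t := by
  have := (((hasDerivAt_id' t).const_mul C).exp.const_mul ε).mul_const (1 + (n : ℝ) ^ 2)
  rwa [show ε * (exp (C * t) * (C * 1)) * (1 + (n : ℝ) ^ 2) = C * latticeBarrier C ε n t by
    unfold latticeBarrier; ring] at this

lemma mul_one_add_sq_le_latticeBarrier {C ε t : ℝ} (hC : 0 ≤ C) (hε : 0 ≤ ε) (ht : 0 ≤ t)
    (n : ℤ) : ε * (1 + n ^ 2) ≤ latticeBarrier C ε n t := by
  have : 1 ≤ exp (C * t) := one_le_exp (mul_nonneg hC ht)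
  unfold latticeBarrier
  gcongr
  exact le_mul_of_one_le_right hε this

theorem le_latticeBarrier {D K B C ε : ℝ} {z : ℤ → ℝ → ℝ} (hD : 0 ≤ D)
    (hcont : ∀ n, ContinuousOn (z n) (Ici 0)) (hbdd : ∀ n t, 0 ≤ t → z n t ≤ B)
    (hinit : ∀ n, z n 0 ≤ 0)
    (hderiv : ∀ n t, 0 < t → 0 ≤ z n t → ∃ z', HasDerivAt (z n) z' t ∧
      z' ≤ D * (z (n + 1) t - 2 * z n t + z (n - 1) t) + K * z n t)
    (hC₀ : 0 ≤ C) (hC : 2 * D + K < C) (hε : 0 < ε) :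
    ∀ n t, 0 ≤ t → z n t ≤ latticeBarrier C ε n t := by
  by_contra! ⟨n₁, t₁, ht₁, hlt₁⟩
  set φ := latticeBarrier C ε
  have hφ : ∀ (n : ℤ) (t : ℝ), 0 ≤ t → ε * (1 + (n : ℝ) ^ 2) ≤ φ n t := fun n t ht =>
    mul_one_add_sq_le_latticeBarrier hC₀ hε.le ht n
  obtain ⟨t₀, ht₀, n₀, hzero, hnonpos⟩ := exists_first_zero_of_finite
    (g := fun n t => z n t - φ n t)
    (fun n => (hcont n).sub fun t _ =>
      (hasDerivAt_latticeBarrier C ε n t).continuousAt.continuousWithinAt)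
    (fun n => sub_neg.2 <| (hinit n).trans_lt <|
      (by positivity : (0 : ℝ) < ε * (1 + n ^ 2)).trans_le (hφ n 0 le_rfl))
    ((finite_setOf_mul_one_add_sq_le (B := B) hε).subset fun n ⟨t, ht, hg⟩ =>
      (hφ n t ht).trans (by linarith [hbdd n t ht]))
    ht₁ (by linarith)
  have hz₀ : z n₀ t₀ = φ n₀ t₀ := by linarith
  have hεe : 0 < ε * exp (C * t₀) := mul_pos hε (exp_pos _)
  have hφ₀ : ε * exp (C * t₀) ≤ φ n₀ t₀ :=
    le_mul_of_one_le_right hεe.le (le_add_of_nonneg_right (sq_nonneg _))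
  obtain ⟨z', hz', hz'le⟩ := hderiv n₀ t₀ ht₀ (hz₀ ▸ hεe.le.trans hφ₀)
  have hgrowth : C * φ n₀ t₀ ≤ z' := sub_nonneg.1 <|
    (hz'.sub (hasDerivAt_latticeBarrier C ε n₀ t₀)).nonneg_of_isMaxOn_Icc ht₀
      fun t ht => (hnonpos n₀ t ht).trans_eq hzero.symm
  have hup := hnonpos (n₀ + 1) t₀ ⟨ht₀.le, le_rfl⟩
  have hdown := hnonpos (n₀ - 1) t₀ ⟨ht₀.le, le_rfl⟩
  have hlap := latticeBarrier_laplacian C ε n₀ t₀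
  have hz'bound : z' ≤ 2 * D * (ε * exp (C * t₀)) + K * φ n₀ t₀ := by
    calc z' ≤ D * (z (n₀ + 1) t₀ - 2 * z n₀ t₀ + z (n₀ - 1) t₀) + K * z n₀ t₀ := hz'le
      _ ≤ D * (φ (n₀ + 1) t₀ - 2 * φ n₀ t₀ + φ (n₀ - 1) t₀) + K * φ n₀ t₀ := by
        rw [hz₀]; gcongr <;> linarith
      _ = 2 * D * (ε * exp (C * t₀)) + K * φ n₀ t₀ := by rw [hlap]; ring
  have hrate : (C - K) * (ε * exp (C * t₀)) ≤ 2 * D * (ε * exp (C * t₀)) :=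
    calc (C - K) * (ε * exp (C * t₀)) ≤ (C - K) * φ n₀ t₀ :=
          mul_le_mul_of_nonneg_left hφ₀ (by linarith)
      _ ≤ 2 * D * (ε * exp (C * t₀)) := by linarith
  linarith [le_of_mul_le_mul_right hrate hεe]

theorem nonpos_of_lattice_subsolution {D K B : ℝ} {z : ℤ → ℝ → ℝ} (hD : 0 ≤ D)
    (hcont : ∀ n, ContinuousOn (z n) (Ici 0)) (hbdd : ∀ n t, 0 ≤ t → z n t ≤ B)
    (hinit : ∀ n, z n 0 ≤ 0)
    (hderiv : ∀ n t, 0 < t → 0 ≤ z n t → ∃ z', HasDerivAt (z n) z' t ∧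
      z' ≤ D * (z (n + 1) t - 2 * z n t + z (n - 1) t) + K * z n t) :
    ∀ n t, 0 ≤ t → z n t ≤ 0 := by
  intro n t ht
  have hC₀ : 0 ≤ 2 * D + |K| + 1 := by positivity
  have hC : 2 * D + K < 2 * D + |K| + 1 := by linarith [le_abs_self K]
  set c := exp ((2 * D + |K| + 1) * t) * (1 + (n : ℝ) ^ 2)
  have hc : 0 < c := by positivity
  refine le_of_forall_pos_le_add fun δ hδ => ?_
  calc z n t ≤ latticeBarrier (2 * D + |K| + 1) (δ / c) n t :=
        le_latticeBarrier hD hcont hbdd hinit hderiv hC₀ hC (by positivity) n t ht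
    _ = 0 + δ := by unfold latticeBarrier c; field_simp; ring

theorem stmt3_general (D M : ℝ) (hD : 0 < D)
    (h : ℝ → ℝ) (L : NNReal) (hLip : LipschitzWith L h)
    (hanti : AntitoneOn h (Set.Icc 0 M)) (hMzero : h M = 0)
    (f : ℝ → ℝ) (hf : ∀ u, f u = u * h u)
    (w v : ℤ → ℝ → ℝ)
    (hwcont : ∀ n : ℤ, ContinuousOn (w n) (Set.Ici 0))
    (hvcont : ∀ n : ℤ, ContinuousOn (v n) (Set.Ici 0))
    (hwrange : ∀ (n : ℤ) (t : ℝ), 0 ≤ t → w n t ∈ Set.Icc 0 M)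
    (hvrange : ∀ (n : ℤ) (t : ℝ), 0 ≤ t → v n t ∈ Set.Icc 0 M)
    (hupper : ∀ (n : ℤ) (t : ℝ), 0 < t → ∃ w' : ℝ, HasDerivAt (w n) w' t ∧
      D * (w (n+1) t - 2 * w n t + w (n-1) t) + f (w n t) ≤ w')
    (hlower : ∀ (n : ℤ) (t : ℝ), 0 < t → ∃ v' : ℝ, HasDerivAt (v n) v' t ∧
      v' ≤ D * (v (n+1) t - 2 * v n t + v (n-1) t) + f (v n t))
    (hinit : ∀ n : ℤ, v n 0 ≤ w n 0) :
    ∀ (n : ℤ) (t : ℝ), 0 < t → v n t ≤ w n t := by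
  have hdiff : ∀ n t, 0 < t → 0 ≤ v n t - w n t →
      ∃ z', HasDerivAt (fun s => v n s - w n s) z' t ∧
        z' ≤ D * ((v (n + 1) t - w (n + 1) t) - 2 * (v n t - w n t) + (v (n - 1) t - w (n - 1) t))
          + L * M * (v n t - w n t) := by
    intro n t ht hvw
    obtain ⟨w', hw', hw'le⟩ := hupper n t ht
    obtain ⟨v', hv', hv'le⟩ := hlower n t ht
    have hreact : f (v n t) - f (w n t) ≤ L * M * (v n t - w n t) := by
      rw [hf, hf]
      exact mul_apply_sub_mul_apply_le_of_antitoneOn hLip hanti hMzero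
        (hwrange n t ht.le).1 (by linarith) (hvrange n t ht.le).2
    exact ⟨v' - w', hv'.sub hw', by linarith⟩
  have hz := nonpos_of_lattice_subsolution (z := fun n t => v n t - w n t) (B := M) hD.le
    (fun n => (hvcont n).sub (hwcont n))
    (fun n t ht => by linarith [(hvrange n t ht).2, (hwrange n t ht).1])
    (fun n => sub_nonpos.2 (hinit n)) hdiff
  exact fun n t ht => sub_nonpos.1 (hz n t ht.le)

/-- Comparison principle for the undelayed lattice equation
`du_n/dt = D(u_{n+1} − 2u_n + u_{n−1}) + f(u_n)` with `f(u) = u·h(u)`: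
an upper solution `w` dominates a lower solution `v` if it does so initially. -/
theorem stmt3 (D M : ℝ) (hD : 0 < D) (hM : 0 < M)
    (h : ℝ → ℝ) (L : NNReal) (hLip : LipschitzWith L h)
    (hanti : AntitoneOn h (Set.Icc 0 M)) (hMzero : h M = 0)
    (f : ℝ → ℝ) (hf : ∀ u, f u = u * h u)
    (w v : ℤ → ℝ → ℝ)
    (hwcont : ∀ n : ℤ, ContinuousOn (w n) (Set.Ici 0))
    (hvcont : ∀ n : ℤ, ContinuousOn (v n) (Set.Ici 0))
    (hwrange : ∀ (n : ℤ) (t : ℝ), 0 ≤ t → w n t ∈ Set.Icc 0 M)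
    (hvrange : ∀ (n : ℤ) (t : ℝ), 0 ≤ t → v n t ∈ Set.Icc 0 M)
    (hupper : ∀ (n : ℤ) (t : ℝ), 0 < t → ∃ w' : ℝ, HasDerivAt (w n) w' t ∧
      D * (w (n+1) t - 2 * w n t + w (n-1) t) + f (w n t) ≤ w')
    (hlower : ∀ (n : ℤ) (t : ℝ), 0 < t → ∃ v' : ℝ, HasDerivAt (v n) v' t ∧
      v' ≤ D * (v (n+1) t - 2 * v n t + v (n-1) t) + f (v n t))
    (hinit : ∀ n : ℤ, v n 0 ≤ w n 0) :
    ∀ (n : ℤ) (t : ℝ), 0 < t → v n t ≤ w n t :=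
  stmt3_general D M hD h L hLip hanti hMzero f hf w v hwcont hvcont hwrange hvrange hupper hlower
    hinit
end

section
/- Let D > 0, τ ≥ 0, and let g : ℝ² → ℝ satisfy (H1), (H2), (H3). Define c* = inf_{λ>0} [D(e^λ + e^{−λ} − 2) + g(0,0)]/λ. If 0 < c < c*, then there is no C¹ function φ : ℝ → ℝ with 0 < φ(ξ) ≤ 1 for all ξ satisfying the wave profile equation c·φ'(ξ) = D(φ(ξ+1) + φ(ξ−1) − 2φ(ξ)) + φ(ξ)·g(φ(ξ), φ(ξ − cτ)) for all ξ ∈ ℝ together with lim_{ξ→−∞} φ(ξ) = 0 and 0 < liminf_{ξ→∞} φ(ξ) ≤ limsup_{ξ→∞} φ(ξ) ≤ 1. -/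
/-!
Below the critical speed, the characteristic equation `c λ = D (e^λ + e^{-λ} - 2) + γ` of the
linearisation at `0` still has, for some `γ < g(0,0)`, a root `λ = μ + iσ` with `0 < σ < π`.
Then `v(ξ) = e^{μξ} sin(σξ)` solves the linear equation, is positive on a window of length `π/σ`
and nonpositive on the unit intervals flanking it. Since `φ → 0` at `-∞`, far to the left `φ` is a
positive supersolution of the same linear equation. Lifting `κ v` under `φ` until the two touch
inside the window gives a zero of the supersolution `φ - κ v ≥ 0`, and at such a zero the term
`D (φ - κ v)(ξ - 1)` must vanish, so the zero propagates leftwards in unit steps until it leaves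
the window, where `φ - κ v ≥ φ > 0`.
-/

open Real Filter

/-- (H1): `g(1,0) = 0` and `g(u,0) > 0` for `u ∈ (0,1)`. -/
def HypH1 (g : ℝ → ℝ → ℝ) : Prop :=
  g 1 0 = 0 ∧ ∀ u ∈ Set.Ioo (0:ℝ) 1, 0 < g u 0

/-- (H2): `g` is Lipschitz continuous and strictly decreasing in each argument on
`[0,1]×[0,1]`, and `g(u,0) → −∞` as `u → ∞`. -/
def HypH2 (g : ℝ → ℝ → ℝ) : Prop :=
  (∃ L : NNReal, LipschitzWith L (fun p : ℝ × ℝ => g p.1 p.2)) ∧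
  (∀ v ∈ Set.Icc (0:ℝ) 1, StrictAntiOn (fun u => g u v) (Set.Icc 0 1)) ∧
  (∀ u ∈ Set.Icc (0:ℝ) 1, StrictAntiOn (fun v => g u v) (Set.Icc 0 1)) ∧
  Filter.Tendsto (fun u => g u 0) Filter.atTop Filter.atBot

/-- (H3): `g(0,1) > 0` and there is `E ∈ (0,1)` with `g(E,E) = 0`. -/
def HypH3 (g : ℝ → ℝ → ℝ) : Prop :=
  0 < g 0 1 ∧ ∃ E ∈ Set.Ioo (0:ℝ) 1, g E E = 0

/-- (H4): if `1 > ū ≥ u̲ > 0` with `g(u̲,ū) ≤ 0` and `g(ū,u̲) ≥ 0`, then `u̲ = ū = E`. -/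
def HypH4 (g : ℝ → ℝ → ℝ) (E : ℝ) : Prop :=
  ∀ ubar lbar : ℝ, ubar < 1 → lbar ≤ ubar → 0 < lbar →
    g lbar ubar ≤ 0 → 0 ≤ g ubar lbar → lbar = E ∧ ubar = E

/-- A bounded mild solution of the delayed lattice differential equation
`du_n/dt = D(u_{n+1} − 2u_n + u_{n−1}) + u_n g(u_n(t), u_n(t−τ))` with initial data `φ`
on `[−τ,0]`, written via the variation-of-constants formula with auxiliary constant `d`. -/
def MildSolution (D τ d : ℝ) (g : ℝ → ℝ → ℝ) (φ u : ℤ → ℝ → ℝ) : Prop :=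
  (∃ C : ℝ, ∀ (n : ℤ) (t : ℝ), -τ ≤ t → |u n t| ≤ C) ∧
  (∀ n : ℤ, ContinuousOn (u n) (Set.Ici (-τ))) ∧
  (∀ (n : ℤ) (s : ℝ), s ∈ Set.Icc (-τ) 0 → u n s = φ n s) ∧
  (∀ (n : ℤ) (t : ℝ), 0 < t →
    u n t = Real.exp (-(2*D+d)*t) * φ n 0 +
      ∫ s in (0:ℝ)..t, Real.exp (-(2*D+d)*(t-s)) *
        (d * u n s + D * (u (n+1) s + u (n-1) s) + u n s * g (u n s) (u n (s - τ))))


open Set Topology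

/-- The right-hand side of the profile equation linearised at `0`, with `γ` in place of `g 0 0`. -/
def latticeOp (D γ : ℝ) (f : ℝ → ℝ) (ξ : ℝ) : ℝ :=
  D * (f (ξ + 1) + f (ξ - 1) - 2 * f ξ) + γ * f ξ

lemma latticeOp_sub_const_mul (D γ κ : ℝ) (f h : ℝ → ℝ) (ξ : ℝ) :
    latticeOp D γ (fun x => f x - κ * h x) ξ = latticeOp D γ f ξ - κ * latticeOp D γ h ξ := by
  simp only [latticeOp]; ring

lemma latticeOp_comp_sub_const (D γ a : ℝ) (f : ℝ → ℝ) (ξ : ℝ) :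
    latticeOp D γ (fun x => f (x - a)) ξ = latticeOp D γ f (ξ - a) := by
  simp only [latticeOp, sub_add_eq_add_sub, sub_right_comm ξ 1 a]

/-- Strong maximum principle: at a zero of the nonnegative supersolution `z` the term `D z(ξ-1)`
must vanish too, so zeros propagate leftwards in unit steps until they reach `(a-1, a]`. -/
lemma pos_of_latticeOp_le {D c γ a b : ℝ} (hD : 0 < D) {z : ℝ → ℝ}
    (hsuper : ∀ ξ ∈ Ioo a b, latticeOp D γ z ξ ≤ c * deriv z ξ)
    (hnonneg : ∀ ξ ∈ Icc (a - 1) (b + 1), 0 ≤ z ξ) (hleft : ∀ ξ ∈ Ioc (a - 1) a, 0 < z ξ) :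
    ∀ ξ ∈ Ioo a b, 0 < z ξ := by
  have hstep : ∀ p ∈ Ioo a b, z p = 0 → z (p - 1) = 0 := by
    intro p hp hzp
    have hmin : IsLocalMin z p := by
      filter_upwards [Ioo_mem_nhds (show a - 1 < p by linarith [hp.1])
        (show p < b + 1 by linarith [hp.2])] with x hx
      rw [hzp]; exact hnonneg x (Ioo_subset_Icc_self hx)
    have h := hsuper p hp
    rw [hmin.deriv_eq_zero, latticeOp, hzp] at h
    have hnext := hnonneg (p + 1) ⟨by linarith [hp.1], by linarith [hp.2]⟩
    have hback := hnonneg (p - 1) ⟨by linarith [hp.1], by linarith [hp.2]⟩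
    nlinarith
  suffices ∀ n : ℕ, ∀ ξ ∈ Ioo a b, ξ < a + n → 0 < z ξ by
    intro ξ hξ
    obtain ⟨n, hn⟩ := exists_nat_gt (ξ - a)
    exact this n ξ hξ (by linarith)
  intro n
  induction n with
  | zero => intro ξ hξ h; push_cast at h; linarith [hξ.1]
  | succ n ih =>
    intro ξ hξ hξn
    refine (hnonneg ξ (Ioo_subset_Icc_self ⟨by linarith [hξ.1], by linarith [hξ.2]⟩)).lt_of_ne' ?_
    intro hzξ
    have hprev := hstep ξ hξ hzξ
    rcases le_or_gt (ξ - 1) a with h | h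
    · exact (hleft (ξ - 1) ⟨by linarith [hξ.1], h⟩).ne' hprev
    · push_cast at hξn
      exact (ih (ξ - 1) ⟨h, by linarith [hξ.2]⟩ (by linarith)).ne' hprev

lemma IsCompact.exists_mul_le_of_pos {α : Type*} [TopologicalSpace α] {s : Set α}
    (hs : IsCompact s) {f h : α → ℝ} (hf : ContinuousOn f s) (hh : ContinuousOn h s)
    (hf0 : ∀ x ∈ s, 0 < f x) (hh0 : ∃ x ∈ s, 0 < h x) :
    ∃ κ > 0, (∀ x ∈ s, κ * h x ≤ f x) ∧ ∃ x ∈ s, κ * h x = f x := by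
  obtain ⟨x₁, hx₁, hhx₁⟩ := hh0
  obtain ⟨x₀, hx₀, hmax⟩ := hs.exists_isMaxOn ⟨x₁, hx₁⟩
    (hh.div hf fun x hx => (hf0 x hx).ne')
  have hf₀ := hf0 x₀ hx₀
  have hh₀ : 0 < h x₀ := by
    have : 0 < h x₀ / f x₀ := (div_pos hhx₁ (hf0 x₁ hx₁)).trans_le (hmax hx₁)
    exact (div_pos_iff_of_pos_right hf₀).mp this
  refine ⟨f x₀ / h x₀, div_pos hf₀ hh₀, fun x hx => ?_, x₀, hx₀, by field_simp⟩
  have hle : h x / f x ≤ h x₀ / f x₀ := hmax hx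
  rw [div_le_div_iff₀ (hf0 x hx) hf₀] at hle
  rw [div_mul_eq_mul_div, div_le_iff₀ hh₀]; linarith

/-- Real and imaginary parts of `c λ = D (e^λ + e^{-λ} - 2) + γ` at `λ = μ + iσ`. -/
def IsCharRoot (D c γ μ σ : ℝ) : Prop :=
  2 * D * sinh μ * sin σ = c * σ ∧ 2 * D * (cosh μ * cos σ - 1) + γ = c * μ

noncomputable def expSin (μ σ ξ : ℝ) : ℝ := exp (μ * ξ) * sin (σ * ξ)

lemma hasDerivAt_expSin (μ σ ξ : ℝ) :
    HasDerivAt (expSin μ σ) (exp (μ * ξ) * (μ * sin (σ * ξ) + σ * cos (σ * ξ))) ξ := by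
  have h := (((hasDerivAt_id ξ).const_mul μ).exp).mul ((hasDerivAt_id ξ).const_mul σ).sin
  simp only [id, mul_one] at h
  exact h.congr_deriv (by ring)

lemma IsCharRoot.latticeOp_expSin {D c γ μ σ : ℝ} (h : IsCharRoot D c γ μ σ) (ξ : ℝ) :
    latticeOp D γ (expSin μ σ) ξ = c * (exp (μ * ξ) * (μ * sin (σ * ξ) + σ * cos (σ * ξ))) := by
  obtain ⟨hsin, hcos⟩ := h
  rw [sinh_eq] at hsin
  rw [cosh_eq] at hcos
  simp only [latticeOp, expSin]
  rw [show μ * (ξ + 1) = μ * ξ + μ by ring, show μ * (ξ - 1) = μ * ξ + -μ by ring,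
    show σ * (ξ + 1) = σ * ξ + σ by ring, show σ * (ξ - 1) = σ * ξ - σ by ring,
    exp_add, exp_add, sin_add, sin_sub]
  linear_combination exp (μ * ξ) * (cos (σ * ξ) * hsin + sin (σ * ξ) * hcos)

lemma expSin_zero (μ σ : ℝ) : expSin μ σ 0 = 0 := by simp [expSin]

lemma expSin_pi_div (μ : ℝ) {σ : ℝ} (hσ : σ ≠ 0) : expSin μ σ (π / σ) = 0 := by
  simp [expSin, mul_div_cancel₀ π hσ]

lemma expSin_pos {μ σ ξ : ℝ} (hσ : 0 < σ) (hξ : ξ ∈ Ioo 0 (π / σ)) : 0 < expSin μ σ ξ := by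
  have h := (lt_div_iff₀' hσ).mp hξ.2
  exact mul_pos (exp_pos _) (sin_pos_of_pos_of_lt_pi (mul_pos hσ hξ.1) h)

lemma expSin_nonpos_of_mem_Icc_neg_one {μ σ ξ : ℝ} (hσ : σ ∈ Ioo 0 π) (hξ : ξ ∈ Icc (-1) 0) :
    expSin μ σ ξ ≤ 0 := by
  refine mul_nonpos_of_nonneg_of_nonpos (exp_pos _).le (sin_nonpos_of_nonpos_of_neg_pi_le ?_ ?_)
  · exact mul_nonpos_of_nonneg_of_nonpos hσ.1.le hξ.2
  · nlinarith [hσ.1, hσ.2, hξ.1]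

lemma expSin_nonpos_of_mem_Icc_pi_div {μ σ ξ : ℝ} (hσ : σ ∈ Ioo 0 π)
    (hξ : ξ ∈ Icc (π / σ) (π / σ + 1)) : expSin μ σ ξ ≤ 0 := by
  have h₁ : π ≤ σ * ξ := (div_le_iff₀' hσ.1).mp hξ.1
  have h₂ : σ * ξ ≤ π + σ := by
    have := mul_le_mul_of_nonneg_left hξ.2 hσ.1.le
    rwa [mul_add, mul_div_cancel₀ π hσ.1.ne', mul_one] at this
  refine mul_nonpos_of_nonneg_of_nonpos (exp_pos _).le ?_
  rw [← neg_nonneg, ← sin_sub_pi]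
  exact sin_nonneg_of_nonneg_of_le_pi (by linarith) (by linarith [hσ.2])

lemma false_of_latticeOp_le {D c γ μ σ : ℝ} (hD : 0 < D) (hroot : IsCharRoot D c γ μ σ)
    (hσ : σ ∈ Ioo 0 π) {φ : ℝ → ℝ} (hφ : Differentiable ℝ φ) (hpos : ∀ ξ, 0 < φ ξ) (a : ℝ)
    (hsuper : ∀ ξ ∈ Ioo a (a + π / σ), latticeOp D γ φ ξ ≤ c * deriv φ ξ) : False := by
  set b := a + π / σ with hb
  have hπσ : 0 < π / σ := div_pos pi_pos hσ.1
  set v : ℝ → ℝ := fun ξ => expSin μ σ (ξ - a) with hv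
  have hv' (ξ : ℝ) : HasDerivAt v (exp (μ * (ξ - a)) *
      (μ * sin (σ * (ξ - a)) + σ * cos (σ * (ξ - a)))) ξ :=
    (hasDerivAt_expSin μ σ (ξ - a)).comp_sub_const ξ a
  obtain ⟨κ, hκ, hbelow, ξ₀, hξ₀, htouch⟩ :=
    (isCompact_Icc (a := a) (b := b)).exists_mul_le_of_pos hφ.continuous.continuousOn
      (fun ξ _ => (hv' ξ).continuousAt.continuousWithinAt) (fun ξ _ => hpos ξ)
      ⟨a + π / σ / 2, ⟨by linarith, by linarith⟩, expSin_pos hσ.1 ⟨by linarith, by linarith⟩⟩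
  set z : ℝ → ℝ := fun ξ => φ ξ - κ * v ξ with hz
  have hz_of_nonpos {ξ : ℝ} (h : v ξ ≤ 0) : 0 < z ξ := by
    have := hpos ξ; have := mul_nonpos_of_nonneg_of_nonpos hκ.le h; simp only [hz]; linarith
  have hleft : ∀ ξ ∈ Icc (a - 1) a, 0 < z ξ := fun ξ hξ =>
    hz_of_nonpos (expSin_nonpos_of_mem_Icc_neg_one hσ ⟨by linarith [hξ.1], by linarith [hξ.2]⟩)
  have hnonneg : ∀ ξ ∈ Icc (a - 1) (b + 1), 0 ≤ z ξ := by
    intro ξ hξ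
    rcases le_or_gt ξ a with h₁ | h₁
    · exact (hleft ξ ⟨hξ.1, h₁⟩).le
    rcases le_or_gt ξ b with h₂ | h₂
    · simp only [hz]; linarith [hbelow ξ ⟨h₁.le, h₂⟩]
    · exact (hz_of_nonpos (expSin_nonpos_of_mem_Icc_pi_div hσ
        ⟨by linarith, by linarith [hξ.2]⟩)).le
  have hzsuper : ∀ ξ ∈ Ioo a b, latticeOp D γ z ξ ≤ c * deriv z ξ := by
    intro ξ hξ
    have hzd : HasDerivAt z _ ξ := (hφ ξ).hasDerivAt.sub ((hv' ξ).const_mul κ)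
    rw [hzd.deriv, latticeOp_sub_const_mul, hv, latticeOp_comp_sub_const,
      hroot.latticeOp_expSin]
    linarith [hsuper ξ hξ]
  have hvξ₀ : v ξ₀ ≠ 0 := by
    intro h; have := hpos ξ₀; rw [← htouch, h, mul_zero] at this; exact lt_irrefl _ this
  have hξ₀' : ξ₀ ∈ Ioo a b := by
    refine ⟨hξ₀.1.lt_of_ne ?_, hξ₀.2.lt_of_ne ?_⟩ <;> rintro rfl <;> apply hvξ₀ <;> simp only [hv]
    · rw [sub_self, expSin_zero]
    · rw [hb, add_sub_cancel_left, expSin_pi_div μ hσ.1.ne']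
  have := pos_of_latticeOp_le hD hzsuper hnonneg
    (fun ξ hξ => hleft ξ (Ioc_subset_Icc_self hξ)) ξ₀ hξ₀'
  simp only [hz, htouch, sub_self] at this
  exact lt_irrefl _ this

lemma sinc_pos {x : ℝ} (hx : x ∈ Ico 0 π) : 0 < sinc x := by
  rcases hx.1.eq_or_lt with rfl | h
  · simp
  · rw [sinc_of_ne_zero h.ne']; exact div_pos (sin_pos_of_pos_of_lt_pi h hx.2) h

/-- For `0 < σ < π`, `μ = arsinh (c σ / (2 D sin σ))` solves the imaginary part of the
characteristic equation; the real part is then positive at `σ = 0` and tends to `-∞` as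
`σ → π`. -/
lemma exists_isCharRoot {D c γ : ℝ} (hD : 0 < D) (hc : 0 < c)
    (hγ : c * arsinh (c / (2 * D)) < 2 * D * (cosh (arsinh (c / (2 * D))) - 1) + γ) :
    ∃ μ σ, σ ∈ Ioo 0 π ∧ IsCharRoot D c γ μ σ := by
  set m : ℝ → ℝ := fun σ => arsinh (c / (2 * D * sinc σ)) with hm
  set Φ : ℝ → ℝ := fun σ => 2 * D * (cosh (m σ) * cos σ - 1) + γ - c * m σ with hΦ
  have hΦcont : ContinuousOn Φ (Ico 0 π) := by
    have : ContinuousOn m (Ico 0 π) := continuous_arsinh.comp_continuousOn <|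
      continuousOn_const.div (continuousOn_const.mul continuous_sinc.continuousOn)
        fun σ hσ => (mul_pos (by positivity) (sinc_pos hσ)).ne'
    fun_prop
  have hΦ0 : 0 < Φ 0 := by simp only [hΦ, hm, sinc_zero, mul_one, cos_zero]; linarith
  have hsinc : Tendsto sinc (𝓝[<] π) (𝓝[>] 0) := by
    refine tendsto_nhdsWithin_of_tendsto_nhds_of_eventually_within _ ?_ ?_
    · simpa [sinc_of_ne_zero pi_ne_zero] using
        (continuous_sinc.tendsto π).mono_left nhdsWithin_le_nhds
    · filter_upwards [Ioo_mem_nhdsLT pi_pos] with σ hσ using sinc_pos (Ioo_subset_Ico_self hσ)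
  have hbound : Tendsto (fun σ => c * cos σ * (sinc σ)⁻¹) (𝓝[<] π) atBot := by
    refine Tendsto.neg_mul_atTop (C := c * cos π) (by simp [hc]) ?_
      (tendsto_inv_nhdsGT_zero.comp hsinc)
    exact ((continuous_const.mul continuous_cos).tendsto π).mono_left nhdsWithin_le_nhds
  obtain ⟨σ₂, hσ₂, hΦσ₂⟩ : ∃ σ ∈ Ioo 0 π, Φ σ < 0 := by
    have hnear : ∀ᶠ σ in 𝓝[<] π, σ ∈ Ioo (π / 2) π := Ioo_mem_nhdsLT (by linarith [pi_pos])
    obtain ⟨σ, hlt, hσ⟩ := ((hbound.eventually (eventually_lt_atBot (-γ))).and hnear).exists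
    have hσ' : σ ∈ Ioo 0 π := ⟨by linarith [hσ.1, pi_pos], hσ.2⟩
    have hsinc := sinc_pos (Ioo_subset_Ico_self hσ')
    have hcos : cos σ ≤ 0 := cos_nonpos_of_pi_div_two_le_of_le hσ.1.le (by linarith [hσ.2, pi_pos])
    have hsinh : 2 * D * sinh (m σ) = c * (sinc σ)⁻¹ := by
      simp only [hm, sinh_arsinh]; field_simp
    have hm0 : 0 ≤ m σ := arsinh_nonneg_iff.mpr (by positivity)
    have hcosh : 2 * D * cosh (m σ) * cos σ ≤ 2 * D * sinh (m σ) * cos σ :=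
      mul_le_mul_of_nonpos_right (by gcongr; exact (sinh_lt_cosh (x := m σ)).le) hcos
    refine ⟨σ, hσ', ?_⟩
    simp only [hΦ]
    nlinarith [mul_nonneg hc.le hm0]
  obtain ⟨σ₀, hσ₀, hΦσ₀⟩ := intermediate_value_Icc' hσ₂.1.le (hΦcont.mono
    (Icc_subset_Ico_right hσ₂.2)) ⟨hΦσ₂.le, hΦ0.le⟩
  have hσ₀' : σ₀ ∈ Ioo 0 π := by
    refine ⟨hσ₀.1.lt_of_ne ?_, hσ₀.2.trans_lt hσ₂.2⟩
    rintro rfl; exact hΦ0.ne' hΦσ₀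
  refine ⟨m σ₀, σ₀, hσ₀', ?_, by simp only [hΦ] at hΦσ₀; linarith⟩
  have := (sin_pos_of_pos_of_lt_pi hσ₀'.1 hσ₀'.2).ne'
  simp only [hm, sinh_arsinh, sinc_of_ne_zero hσ₀'.1.ne']
  field_simp

/-- If `S` is not bounded below then `sInf S = 0`, which `0 < c` rules out. -/
lemma lt_of_pos_of_lt_sInf {S : Set ℝ} {c : ℝ} (hc0 : 0 < c) (hc : c < sInf S) {y : ℝ}
    (hy : y ∈ S) : c < y := by
  by_cases hS : BddBelow S
  · exact hc.trans_le (csInf_le hS hy)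
  · rw [Real.sInf_of_not_bddBelow hS] at hc; linarith

lemma mul_lt_of_lt_critSpeed {D r c : ℝ} (hc0 : 0 < c) (hc : c < critSpeed D r) {l : ℝ}
    (hl : 0 < l) : c * l < 2 * D * (cosh l - 1) + r := by
  have := (lt_div_iff₀ hl).mp (lt_of_pos_of_lt_sInf hc0 hc ⟨l, hl, rfl⟩)
  rw [cosh_eq]; linarith

lemma eventually_latticeOp_le {D c γ s : ℝ} {g : ℝ → ℝ → ℝ}
    (hg : ContinuousAt (fun p : ℝ × ℝ => g p.1 p.2) (0, 0)) (hγ : γ < g 0 0) {φ : ℝ → ℝ}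
    (hpos : ∀ ξ, 0 < φ ξ) (hφ0 : Tendsto φ atBot (𝓝 0))
    (heq : ∀ ξ, c * deriv φ ξ =
      D * (φ (ξ + 1) + φ (ξ - 1) - 2 * φ ξ) + φ ξ * g (φ ξ) (φ (ξ - s))) :
    ∀ᶠ ξ in atBot, latticeOp D γ φ ξ ≤ c * deriv φ ξ := by
  have hpair : Tendsto (fun ξ => (φ ξ, φ (ξ - s))) atBot (𝓝 (0, 0)) :=
    hφ0.prodMk_nhds (hφ0.comp (tendsto_atBot_add_const_right _ (-s) tendsto_id))
  filter_upwards [(hg.tendsto.comp hpair).eventually (eventually_gt_nhds hγ)] with ξ hξ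
  have : γ * φ ξ ≤ φ ξ * g (φ ξ) (φ (ξ - s)) := by
    rw [mul_comm]; exact mul_le_mul_of_nonneg_left hξ.le (hpos ξ).le
  rw [heq, latticeOp]
  linarith

theorem stmt13_general (D τ : ℝ) (hD : 0 < D)
    (g : ℝ → ℝ → ℝ) (hH2 : HypH2 g)
    (c : ℝ) (hc0 : 0 < c) (hc : c < critSpeed D (g 0 0)) :
    ¬ ∃ φ : ℝ → ℝ, ContDiff ℝ 1 φ ∧
      (∀ ξ : ℝ, 0 < φ ξ ∧ φ ξ ≤ 1) ∧
      (∀ ξ : ℝ, c * deriv φ ξ =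
        D * (φ (ξ+1) + φ (ξ-1) - 2 * φ ξ) + φ ξ * g (φ ξ) (φ (ξ - c*τ))) ∧
      Tendsto φ atBot (nhds 0) ∧
      0 < Filter.liminf φ atTop ∧ Filter.limsup φ atTop ≤ 1 := by
  rintro ⟨φ, hφ, hφb, hφeq, hφ0, -⟩
  obtain ⟨⟨L, hL⟩, -⟩ := hH2
  have hpos (ξ : ℝ) : 0 < φ ξ := (hφb ξ).1
  have hμ₀ : 0 < arsinh (c / (2 * D)) := arsinh_pos_iff.mpr (by positivity)
  obtain ⟨γ, hγ, hγg⟩ :=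
    exists_between (sub_lt_iff_lt_add'.mpr (mul_lt_of_lt_critSpeed hc0 hc hμ₀))
  obtain ⟨μ, σ, hσ, hroot⟩ := exists_isCharRoot hD hc0 (sub_lt_iff_lt_add'.mp hγ)
  obtain ⟨X, hX⟩ := eventually_atBot.mp
    (eventually_latticeOp_le hL.continuous.continuousAt hγg hpos hφ0 hφeq)
  exact false_of_latticeOp_le hD hroot hσ (hφ.differentiable one_ne_zero) hpos (X - π / σ)
    fun ξ hξ => hX ξ (by linarith [hξ.2])

/-- Nonexistence of invasion traveling wave profiles for speeds `0 < c < c*`. -/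
theorem stmt13 (D τ : ℝ) (hD : 0 < D) (hτ : 0 ≤ τ)
    (g : ℝ → ℝ → ℝ) (hH1 : HypH1 g) (hH2 : HypH2 g) (hH3 : HypH3 g)
    (c : ℝ) (hc0 : 0 < c) (hc : c < critSpeed D (g 0 0)) :
    ¬ ∃ φ : ℝ → ℝ, ContDiff ℝ 1 φ ∧
      (∀ ξ : ℝ, 0 < φ ξ ∧ φ ξ ≤ 1) ∧
      (∀ ξ : ℝ, c * deriv φ ξ =
        D * (φ (ξ+1) + φ (ξ-1) - 2 * φ ξ) + φ ξ * g (φ ξ) (φ (ξ - c*τ))) ∧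
      Tendsto φ atBot (nhds 0) ∧
      0 < Filter.liminf φ atTop ∧ Filter.limsup φ atTop ≤ 1 :=
  stmt13_general D τ hD g hH2 c hc0 hc
end

section
/- Let D > 0, τ ≥ 0, and let g : ℝ² → ℝ satisfy (H1), (H2), (H3), (H4), with E ∈ (0,1) the unique value with g(E,E) = 0. Define c* = inf_{λ>0} [D(e^λ + e^{−λ} − 2) + g(0,0)]/λ. If c ≥ c* and φ : ℝ → ℝ is a C¹ function with 0 < φ(ξ) ≤ 1 satisfying the wave profile equation c·φ'(ξ) = D(φ(ξ+1) + φ(ξ−1) − 2φ(ξ)) + φ(ξ)·g(φ(ξ), φ(ξ − cτ)) for all ξ ∈ ℝ and the conditions lim_{ξ→−∞} φ(ξ) = 0 and 0 < liminf_{ξ→∞} φ(ξ) ≤ limsup_{ξ→∞} φ(ξ) ≤ 1, then in fact lim_{ξ→∞} φ(ξ) = E. -/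
/-! Let `S` and `I` be the upper and lower limits of `φ` at `+∞`. Maximising `φ(s) + ε s` over a
long enough window ending at a time where `φ` is close to `S` produces arbitrarily late times
where `φ` is close to `S` and `φ' ≥ -ε`. There the wave equation, with the neighbours at most
`S + ε` and the delayed value at least `I - ε`, gives `S · g(S, I) ≥ 0` as `ε → 0`; symmetrically
`I · g(I, S) ≤ 0`. Since `g(1, I) < g(1, 0) = 0`, also `S < 1`, and (H4) forces `I = S = E`. -/

open Real Filter

open Set
open scoped Topology

lemma IsMaxOn.hasDerivAt_nonneg_of_mem_Ioc {ψ : ℝ → ℝ} {ψ' a b x : ℝ}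
    (hmax : IsMaxOn ψ (Icc a b) x) (hx : x ∈ Ioc a b) (hψ : HasDerivAt ψ ψ' x) : 0 ≤ ψ' := by
  have hcone : a - x ∈ posTangentConeAt (Icc a b) x :=
    sub_mem_posTangentConeAt_of_segment_subset <| (convex_Icc a b).segment_subset
      (Ioc_subset_Icc_self hx) (left_mem_Icc.2 (hx.1.le.trans hx.2))
  have h := hmax.localize.hasFDerivWithinAt_nonpos hψ.hasFDerivAt.hasFDerivWithinAt hcone
  rw [ContinuousLinearMap.toSpanSingleton_apply, smul_eq_mul] at h
  exact nonneg_of_mul_nonpos_right h (sub_neg.2 hx.1)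

theorem frequently_lt_and_neg_le_deriv {f : ℝ → ℝ} (hf : Differentiable ℝ f) {a b ε : ℝ}
    (hε : 0 < ε) (hb : ∀ᶠ t in atTop, f t ≤ b) (ha : ∃ᶠ t in atTop, a < f t) :
    ∃ᶠ t in atTop, a < f t ∧ -ε ≤ deriv f t := by
  obtain ⟨T₀, hT₀⟩ := eventually_atTop.1 hb
  obtain ⟨L, hL0, hL⟩ : ∃ L > 0, b - a < ε * L :=
    ⟨|b - a| / ε + 1, by positivity, by
      rw [mul_add, mul_div_cancel₀ _ hε.ne', mul_one]; linarith [le_abs_self (b - a)]⟩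
  rw [frequently_atTop]
  intro T
  obtain ⟨t₁, ht₁, hat₁⟩ := ha.forall_exists_of_atTop (max T T₀ + L)
  have hψ (s : ℝ) : HasDerivAt (fun s => f s + ε * s) (deriv f s + ε) s := by
    simpa using (hf s).hasDerivAt.fun_add ((hasDerivAt_id' s).const_mul ε)
  obtain ⟨t, ht, hmax⟩ := (isCompact_Icc (a := t₁ - L) (b := t₁)).exists_isMaxOn
    (nonempty_Icc.2 (by linarith)) fun s _ => (hψ s).continuousAt.continuousWithinAt
  have hle : f t₁ + ε * t₁ ≤ f t + ε * t := hmax (right_mem_Icc.2 (by linarith))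
  -- at the left end `f + ε s` would exceed `b`, hence the maximum lies in `Ioc`
  have hleft : t₁ - L < t := by
    refine ht.1.lt_of_ne fun heq => ?_
    have := hT₀ (t₁ - L) (by linarith [le_max_right T T₀])
    rw [← heq] at hle
    linarith
  refine ⟨t, by linarith [le_max_left T T₀], ?_, ?_⟩
  · nlinarith [mul_le_mul_of_nonneg_left ht.2 hε.le]
  · linarith [hmax.hasDerivAt_nonneg_of_mem_Ioc ⟨hleft, ht.2⟩ (hψ t)]

theorem frequently_gt_and_deriv_le {f : ℝ → ℝ} (hf : Differentiable ℝ f) {a b ε : ℝ}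
    (hε : 0 < ε) (hb : ∀ᶠ t in atTop, b ≤ f t) (ha : ∃ᶠ t in atTop, f t < a) :
    ∃ᶠ t in atTop, f t < a ∧ deriv f t ≤ ε := by
  refine (frequently_lt_and_neg_le_deriv hf.neg hε (b := -b) (a := -a)
    (hb.mono fun _ h => neg_le_neg h) (ha.mono fun _ h => neg_lt_neg h)).mono fun t ht => ?_
  rw [deriv.neg] at ht
  exact ⟨neg_lt_neg_iff.1 ht.1, by linarith [ht.2]⟩

lemma critSpeed_nonneg {D r : ℝ} (hD : 0 ≤ D) (hr : 0 ≤ r) : 0 ≤ critSpeed D r := by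
  refine le_csInf ⟨_, 1, one_pos, rfl⟩ ?_
  rintro _ ⟨l, hl, rfl⟩
  have h₁ := add_one_le_exp l
  have h₂ := add_one_le_exp (-l)
  exact div_nonneg (by nlinarith) hl.le

lemma HypH2.continuous {g : ℝ → ℝ → ℝ} (h : HypH2 g) : Continuous fun p : ℝ × ℝ => g p.1 p.2 :=
  h.1.choose_spec.continuous

lemma HypH2.antitoneOn {g : ℝ → ℝ → ℝ} (h : HypH2 g) :
    AntitoneOn (fun p : ℝ × ℝ => g p.1 p.2) (Icc 0 1 ×ˢ Icc 0 1) := by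
  obtain ⟨-, h₁, h₂, -⟩ := h
  rintro ⟨u, v⟩ ⟨hu, hv⟩ ⟨u', v'⟩ ⟨hu', hv'⟩ ⟨huu', hvv'⟩
  calc g u' v' ≤ g u v' := (h₁ v' hv').antitoneOn hu hu' huu'
    _ ≤ g u v := (h₂ u hu).antitoneOn hv hv' hvv'

section TravelingWave

variable {D c τ : ℝ} {g : ℝ → ℝ → ℝ} {φ : ℝ → ℝ}
  (hD : 0 ≤ D) (hc : 0 ≤ c) (hφ : Differentiable ℝ φ) (hrange : ∀ ξ, 0 < φ ξ ∧ φ ξ ≤ 1)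
  (hwave : ∀ ξ, c * deriv φ ξ =
    D * (φ (ξ + 1) + φ (ξ - 1) - 2 * φ ξ) + φ ξ * g (φ ξ) (φ (ξ - c * τ)))
  (hg : AntitoneOn (fun p : ℝ × ℝ => g p.1 p.2) (Icc 0 1 ×ˢ Icc 0 1))
include hD hc hφ hrange hwave hg

lemma sub_mul_g_sub_sub_ge {I S ε : ℝ} (hε : 0 < ε) (hIε : ε ≤ I) (hSε : ε ≤ S)
    (hlow : ∀ᶠ t in atTop, I - ε < φ t) (hup : ∀ᶠ t in atTop, φ t < S + ε)
    (hS : ∃ᶠ t in atTop, S - ε < φ t) :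
    -((c + 4 * D) * ε) ≤ (S - ε) * g (S - ε) (I - ε) := by
  obtain ⟨T, hT⟩ := eventually_atTop.1 (hlow.and hup)
  obtain ⟨t, ⟨hSt, hdt⟩, ht⟩ := ((frequently_lt_and_neg_le_deriv hφ hε
    (hup.mono fun _ h => h.le) hS).and_eventually (eventually_ge_atTop (T + 1 + |c * τ|))).exists
  have h₀ := hT t (by linarith [abs_nonneg (c * τ)])
  have hnext := hT (t + 1) (by linarith [abs_nonneg (c * τ)])
  have hprev := hT (t - 1) (by linarith [abs_nonneg (c * τ)])
  have hdel := hT (t - c * τ) (by linarith [le_abs_self (c * τ)])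
  have hmem (s : ℝ) : φ s ∈ Icc (0 : ℝ) 1 := ⟨(hrange s).1.le, (hrange s).2⟩
  have hreact : -((c + 4 * D) * ε) ≤ φ t * g (φ t) (φ (t - c * τ)) := by
    nlinarith [hwave t, mul_le_mul_of_nonneg_left hdt hc,
      mul_le_mul_of_nonneg_left (show φ (t + 1) + φ (t - 1) - 2 * φ t ≤ 4 * ε by linarith) hD]
  have hmono : g (φ t) (φ (t - c * τ)) ≤ g (S - ε) (I - ε) :=
    hg (a := (S - ε, I - ε)) (b := (φ t, φ (t - c * τ)))
      ⟨⟨by linarith, by linarith [hrange t]⟩, ⟨by linarith, by linarith [hrange (t - c * τ)]⟩⟩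
      ⟨hmem t, hmem _⟩ ⟨hSt.le, hdel.1.le⟩
  rcases le_or_gt 0 (g (φ t) (φ (t - c * τ))) with hpos | hneg <;> nlinarith

lemma sub_mul_g_add_add_le {I S ε : ℝ} (hε : 0 < ε) (hIε : ε ≤ I) (hI1 : I + ε ≤ 1)
    (hS1 : S + ε ≤ 1) (hlow : ∀ᶠ t in atTop, I - ε < φ t) (hup : ∀ᶠ t in atTop, φ t < S + ε)
    (hI : ∃ᶠ t in atTop, φ t < I + ε) :
    (I - ε) * g (I + ε) (S + ε) ≤ (c + 4 * D) * ε := by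
  obtain ⟨T, hT⟩ := eventually_atTop.1 (hlow.and hup)
  obtain ⟨t, ⟨hIt, hdt⟩, ht⟩ := ((frequently_gt_and_deriv_le hφ hε
    (hlow.mono fun _ h => h.le) hI).and_eventually (eventually_ge_atTop (T + 1 + |c * τ|))).exists
  have h₀ := hT t (by linarith [abs_nonneg (c * τ)])
  have hnext := hT (t + 1) (by linarith [abs_nonneg (c * τ)])
  have hprev := hT (t - 1) (by linarith [abs_nonneg (c * τ)])
  have hdel := hT (t - c * τ) (by linarith [le_abs_self (c * τ)])
  have hmem (s : ℝ) : φ s ∈ Icc (0 : ℝ) 1 := ⟨(hrange s).1.le, (hrange s).2⟩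
  have hreact : φ t * g (φ t) (φ (t - c * τ)) ≤ (c + 4 * D) * ε := by
    nlinarith [hwave t, mul_le_mul_of_nonneg_left hdt hc,
      mul_le_mul_of_nonneg_left (show -(4 * ε) ≤ φ (t + 1) + φ (t - 1) - 2 * φ t by linarith) hD]
  have hmono : g (I + ε) (S + ε) ≤ g (φ t) (φ (t - c * τ)) :=
    hg (a := (φ t, φ (t - c * τ))) (b := (I + ε, S + ε)) ⟨hmem t, hmem _⟩
      ⟨⟨by linarith, hI1⟩, ⟨by linarith [hrange (t - c * τ)], hS1⟩⟩ ⟨hIt.le, hdel.2.le⟩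
  rcases le_or_gt (g (φ t) (φ (t - c * τ))) 0 with hneg | hpos <;> nlinarith

lemma g_limsup_liminf_nonneg (hgc : Continuous fun p : ℝ × ℝ => g p.1 p.2)
    (hI : 0 < liminf φ atTop) : 0 ≤ g (limsup φ atTop) (liminf φ atTop) := by
  set S := limsup φ atTop
  set I := liminf φ atTop
  have hbdd : IsBoundedUnder (· ≤ ·) atTop φ := isBoundedUnder_of ⟨1, fun ξ => (hrange ξ).2⟩
  have hbdd' : IsBoundedUnder (· ≥ ·) atTop φ := isBoundedUnder_of ⟨0, fun ξ => (hrange ξ).1.le⟩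
  have hIS : I ≤ S := liminf_le_limsup hbdd hbdd'
  have hlim : Tendsto (fun ε => (S - ε) * g (S - ε) (I - ε) + (c + 4 * D) * ε) (𝓝[>] 0)
      (𝓝 (S * g S I)) := by
    have : Continuous fun ε => g (S - ε) (I - ε) :=
      hgc.comp (by fun_prop : Continuous fun ε : ℝ => (S - ε, I - ε))
    simpa using ((by fun_prop : Continuous fun ε => (S - ε) * g (S - ε) (I - ε) +
      (c + 4 * D) * ε).tendsto 0).mono_left nhdsWithin_le_nhds
  have hSg : 0 ≤ S * g S I := ge_of_tendsto hlim <| by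
    filter_upwards [Ioc_mem_nhdsGT hI] with ε ⟨hε, hεI⟩
    linarith [sub_mul_g_sub_sub_ge hD hc hφ hrange hwave hg hε hεI (hεI.trans hIS)
      (eventually_lt_of_lt_liminf (by linarith) hbdd')
      (eventually_lt_of_limsup_lt (by linarith) hbdd)
      (frequently_lt_of_lt_limsup hbdd'.isCoboundedUnder_le (by linarith))]
  exact nonneg_of_mul_nonneg_right hSg (hI.trans_le hIS)

lemma g_liminf_limsup_nonpos (hgc : Continuous fun p : ℝ × ℝ => g p.1 p.2)
    (hI : 0 < liminf φ atTop) (hS : limsup φ atTop < 1) :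
    g (liminf φ atTop) (limsup φ atTop) ≤ 0 := by
  set S := limsup φ atTop
  set I := liminf φ atTop
  have hbdd : IsBoundedUnder (· ≤ ·) atTop φ := isBoundedUnder_of ⟨1, fun ξ => (hrange ξ).2⟩
  have hbdd' : IsBoundedUnder (· ≥ ·) atTop φ := isBoundedUnder_of ⟨0, fun ξ => (hrange ξ).1.le⟩
  have hIS : I ≤ S := liminf_le_limsup hbdd hbdd'
  have hlim : Tendsto (fun ε => (I - ε) * g (I + ε) (S + ε) - (c + 4 * D) * ε) (𝓝[>] 0)
      (𝓝 (I * g I S)) := by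
    have : Continuous fun ε => g (I + ε) (S + ε) :=
      hgc.comp (by fun_prop : Continuous fun ε : ℝ => (I + ε, S + ε))
    simpa using ((by fun_prop : Continuous fun ε => (I - ε) * g (I + ε) (S + ε) -
      (c + 4 * D) * ε).tendsto 0).mono_left nhdsWithin_le_nhds
  have hIg : I * g I S ≤ 0 := le_of_tendsto hlim <| by
    filter_upwards [Ioc_mem_nhdsGT (lt_min hI (sub_pos.2 hS))] with ε ⟨hε, hεmin⟩
    have hεI := hεmin.trans (min_le_left _ _)
    have hεS := hεmin.trans (min_le_right _ _)
    linarith [sub_mul_g_add_add_le hD hc hφ hrange hwave hg (S := S) hε hεI (by linarith)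
      (by linarith)
      (eventually_lt_of_lt_liminf (by linarith) hbdd')
      (eventually_lt_of_limsup_lt (by linarith) hbdd)
      (frequently_lt_of_liminf_lt hbdd.isCoboundedUnder_ge (by linarith))]
  exact nonpos_of_mul_nonpos_right hIg hI

end TravelingWave

theorem stmt16_general (D τ : ℝ) (hD : 0 < D)
    (g : ℝ → ℝ → ℝ) (E : ℝ)
    (hH1 : HypH1 g) (hH2 : HypH2 g) (hH4 : HypH4 g E)
    (c : ℝ) (hc : critSpeed D (g 0 0) ≤ c)
    (φ : ℝ → ℝ) (hφ : ContDiff ℝ 1 φ)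
    (hrange : ∀ ξ : ℝ, 0 < φ ξ ∧ φ ξ ≤ 1)
    (hwave : ∀ ξ : ℝ, c * deriv φ ξ =
      D * (φ (ξ+1) + φ (ξ-1) - 2 * φ ξ) + φ ξ * g (φ ξ) (φ (ξ - c*τ)))
    (hliminf : 0 < Filter.liminf φ atTop) (hlimsup : Filter.limsup φ atTop ≤ 1) :
    Tendsto φ atTop (nhds E) := by
  have h01 : (0 : ℝ) ∈ Icc (0 : ℝ) 1 := left_mem_Icc.2 zero_le_one
  have h11 : (1 : ℝ) ∈ Icc (0 : ℝ) 1 := right_mem_Icc.2 zero_le_one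
  have hg00 : 0 < g 0 0 := hH1.1.symm.trans_lt (hH2.2.1 0 h01 h01 h11 one_pos)
  have hc0 : 0 ≤ c := (critSpeed_nonneg hD.le hg00.le).trans hc
  have hbdd : IsBoundedUnder (· ≤ ·) atTop φ := isBoundedUnder_of ⟨1, fun ξ => (hrange ξ).2⟩
  have hbdd' : IsBoundedUnder (· ≥ ·) atTop φ := isBoundedUnder_of ⟨0, fun ξ => (hrange ξ).1.le⟩
  have hIS := liminf_le_limsup hbdd hbdd'
  have hφd := hφ.differentiable one_ne_zero
  have hgSI := g_limsup_liminf_nonneg hD.le hc0 hφd hrange hwave hH2.antitoneOn hH2.continuous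
    hliminf
  have hS1 : limsup φ atTop < 1 := hlimsup.lt_of_ne fun hS => by
    have := hH2.2.2.1 1 h11 h01 ⟨hliminf.le, hIS.trans hlimsup⟩ hliminf
    rw [hS] at hgSI
    linarith [hH1.1]
  have hgIS := g_liminf_limsup_nonpos hD.le hc0 hφd hrange hwave hH2.antitoneOn hH2.continuous
    hliminf hS1
  obtain ⟨hIE, hSE⟩ := hH4 _ _ hS1 hIS hliminf hgIS hgSI
  exact tendsto_of_liminf_eq_limsup hIE hSE hbdd hbdd'

/-- Under (H1)–(H4), every invasion traveling wave profile with speed `c ≥ c*`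
in fact converges to `E` at `+∞`. -/
theorem stmt16 (D τ : ℝ) (hD : 0 < D) (hτ : 0 ≤ τ)
    (g : ℝ → ℝ → ℝ) (E : ℝ) (hE : E ∈ Set.Ioo (0:ℝ) 1) (hgE : g E E = 0)
    (hH1 : HypH1 g) (hH2 : HypH2 g) (hH3 : HypH3 g) (hH4 : HypH4 g E)
    (c : ℝ) (hc : critSpeed D (g 0 0) ≤ c)
    (φ : ℝ → ℝ) (hφ : ContDiff ℝ 1 φ)
    (hrange : ∀ ξ : ℝ, 0 < φ ξ ∧ φ ξ ≤ 1)
    (hwave : ∀ ξ : ℝ, c * deriv φ ξ =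
      D * (φ (ξ+1) + φ (ξ-1) - 2 * φ ξ) + φ ξ * g (φ ξ) (φ (ξ - c*τ)))
    (hminus : Tendsto φ atBot (nhds 0))
    (hliminf : 0 < Filter.liminf φ atTop) (hlimsup : Filter.limsup φ atTop ≤ 1) :
    Tendsto φ atTop (nhds E) :=
  stmt16_general D τ hD g E hH1 hH2 hH4 c hc φ hφ hrange hwave hliminf hlimsup
end
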